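/- arXiv:2006.05330 — 5 statements merged into one kernel-verified Lean document; each statement's English description precedes it below -/
import Mathlib

section
/- Every simple game on n voters can be written as a finite union of weighted games, i.e., there exist weighted games v_1,...,v_k with v(S)=max_j v_j(S) for all S⊆N. -/
open Finset

def IsSimpleGame {n : ℕ} (v : Finset (Fin n) → ℕ) : Prop :=
  (∀ S, v S = 0 ∨ v S = 1) ∧ (∀ S T : Finset (Fin n), S ⊆ T → v S ≤ v T) ∧
    (∃ S, v S = 0) ∧ (∃ S, v S = 1)

def IsWeighted {n : ℕ} (v : Finset (Fin n) → ℕ) : Prop :=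
  ∃ (w : Fin n → ℝ) (q : ℝ), (∀ i, 0 ≤ w i) ∧ 0 < q ∧
    ∀ S : Finset (Fin n), v S = 1 ↔ q ≤ ∑ i ∈ S, w i

noncomputable def wg {n : ℕ} (q : ℝ) (w : Fin n → ℝ) (S : Finset (Fin n)) : ℕ :=
  if q ≤ ∑ i ∈ S, w i then 1 else 0

def Dominates {n : ℕ} (v : Finset (Fin n) → ℕ) (i j : Fin n) : Prop :=
  ∀ S : Finset (Fin n), i ∉ S → j ∉ S → v (insert j S) ≤ v (insert i S)

noncomputable def SSI {n : ℕ} (v : Finset (Fin n) → ℕ) (i : Fin n) : ℝ :=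
  ∑ S ∈ (univ.erase i).powerset,
    ((S.card.factorial * (n - S.card - 1).factorial : ℕ) : ℝ) / (n.factorial : ℝ) *
      ((v (insert i S) : ℝ) - (v S : ℝ))

def eta {n : ℕ} (v : Finset (Fin n) → ℕ) (i : Fin n) : ℤ :=
  ∑ S ∈ (univ.erase i).powerset, ((v (insert i S) : ℤ) - (v S : ℤ))

noncomputable def PBI {n : ℕ} (v : Finset (Fin n) → ℕ) (i : Fin n) : ℝ :=
  ((eta v i : ℤ) : ℝ) / ∑ j, ((eta v j : ℤ) : ℝ)


/-!
A simple game is the union of the unanimity games of its winning coalitions: `S` wins iff it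
contains some winning `T`, by monotonicity. The unanimity game of a nonempty `T` is weighted,
with weight `1` on the members of `T` and quota `|T|`, and the winning coalitions are nonempty
because the empty one loses.
-/

def unanimityGame {n : ℕ} (T : Finset (Fin n)) (S : Finset (Fin n)) : ℕ :=
  if T ⊆ S then 1 else 0

lemma isWeighted_unanimityGame {n : ℕ} {T : Finset (Fin n)} (hT : T.Nonempty) :
    IsWeighted (unanimityGame T) := by
  refine ⟨fun i => if i ∈ T then 1 else 0, T.card, fun i => by positivity,
    by exact_mod_cast hT.card_pos, fun S => ?_⟩
  rw [sum_ite_mem, sum_const, nsmul_one, Nat.cast_le, unanimityGame]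
  constructor
  · intro h
    rw [inter_eq_right.2 (by simpa using h)]
  · intro h
    rw [if_pos (inter_eq_right.1 (eq_of_subset_of_card_le inter_subset_right h))]

namespace IsSimpleGame

variable {n : ℕ} {v : Finset (Fin n) → ℕ}

lemma apply_empty (hv : IsSimpleGame v) : v ∅ = 0 := by
  obtain ⟨S₀, hS₀⟩ := hv.2.2.1
  have := hv.2.1 ∅ S₀ (empty_subset _)
  omega

lemma nonempty_of_apply_eq_one (hv : IsSimpleGame v) {T : Finset (Fin n)} (hT : v T = 1) :
    T.Nonempty :=
  nonempty_iff_ne_empty.2 fun hT₀ => by simp [hT₀, hv.apply_empty] at hT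

lemma unanimityGame_le (hv : IsSimpleGame v) {T : Finset (Fin n)} (hT : v T = 1)
    (S : Finset (Fin n)) : unanimityGame T S ≤ v S := by
  unfold unanimityGame
  split_ifs with hTS
  · exact hT ▸ hv.2.1 T S hTS
  · exact Nat.zero_le _

lemma eq_foldr_max_unanimityGame (hv : IsSimpleGame v) (S : Finset (Fin n)) :
    v S = (((univ.filter fun T => v T = 1).toList.map unanimityGame).map
      (fun u => u S)).foldr max 0 := by
  apply le_antisymm
  · rcases hv.1 S with h | h
    · simp [h]
    · have hS : unanimityGame S ∈ (univ.filter fun T => v T = 1).toList.map unanimityGame :=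
        List.mem_map_of_mem (mem_toList.2 (mem_filter.2 ⟨mem_univ S, h⟩))
      exact List.le_max_of_le' 0 (List.mem_map_of_mem hS) (by simp [h, unanimityGame])
  · refine List.max_le_of_forall_le _ _ ?_
    simp only [List.map_map, List.mem_map, mem_toList]
    rintro _ ⟨T, hT, rfl⟩
    exact hv.unanimityGame_le (mem_filter.1 hT).2 S

end IsSimpleGame

theorem stmt3 (n : ℕ) (v : Finset (Fin n) → ℕ) (hv : IsSimpleGame v) :
    ∃ L : List (Finset (Fin n) → ℕ), L ≠ [] ∧ (∀ u ∈ L, IsWeighted u) ∧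
      ∀ S, v S = (L.map (fun u => u S)).foldr max 0 := by
  obtain ⟨S₁, hS₁⟩ := hv.2.2.2
  refine ⟨(univ.filter fun T => v T = 1).toList.map unanimityGame, by simpa using ⟨S₁, hS₁⟩,
    ?_, hv.eq_foldr_max_unanimityGame⟩
  simp only [List.mem_map, mem_toList, mem_filter, mem_univ, true_and]
  rintro _ ⟨T, hT, rfl⟩
  exact isWeighted_unanimityGame (hv.nonempty_of_apply_eq_one hT)
end

section
/- Isbell's desirability relation ⪰ on the voters of any simple game is transitive. -/
open Finset

section Dominates

variable {n : ℕ} {v : Finset (Fin n) → ℕ} {i j k : Fin n}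

theorem dominates_refl (v : Finset (Fin n) → ℕ) (i : Fin n) : Dominates v i i :=
  fun _ _ _ ↦ le_rfl

theorem Dominates.apply_insert_le_of_mem (hij : Dominates v i j) (hjk : Dominates v j k)
    (hik : i ≠ k) {S : Finset (Fin n)} (hiS : i ∉ S) (hkS : k ∉ S) (hjS : j ∈ S) :
    v (insert k S) ≤ v (insert i S) := by
  set T := S.erase j
  have hS : insert j T = S := insert_erase hjS
  have hiT : i ∉ T := fun h ↦ hiS (mem_of_mem_erase h)
  have hkT : k ∉ T := fun h ↦ hkS (mem_of_mem_erase h)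
  have hjT : j ∉ T := notMem_erase j S
  have hji : j ≠ i := by rintro rfl; exact hiS hjS
  have hjk' : j ≠ k := by rintro rfl; exact hkS hjS
  calc v (insert k S) = v (insert j (insert k T)) := by rw [← hS, insert_comm]
    _ ≤ v (insert i (insert k T)) :=
        hij _ (by simp [hik, hiT]) (by simp [hjk', hjT])
    _ = v (insert k (insert i T)) := by rw [insert_comm]
    _ ≤ v (insert j (insert i T)) :=
        hjk _ (by simp [hji, hjT]) (by simp [hik.symm, hkT])
    _ = v (insert i S) := by rw [← hS, insert_comm]

theorem Dominates.trans (hij : Dominates v i j) (hjk : Dominates v j k) : Dominates v i k := by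
  rcases eq_or_ne i k with rfl | hik
  · exact dominates_refl v i
  intro S hiS hkS
  by_cases hjS : j ∈ S
  · exact hij.apply_insert_le_of_mem hjk hik hiS hkS hjS
  · exact (hjk S hjS hkS).trans (hij S hiS hjS)

end Dominates

theorem stmt6_general (n : ℕ) (v : Finset (Fin n) → ℕ)
    (i j k : Fin n) (hij : Dominates v i j) (hjk : Dominates v j k) :
    Dominates v i k :=
  hij.trans hjk

theorem stmt6 (n : ℕ) (v : Finset (Fin n) → ℕ) (hv : IsSimpleGame v)
    (i j k : Fin n) (hij : Dominates v i j) (hjk : Dominates v j k) :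
    Dominates v i k :=
  stmt6_general n v i j k hij hjk
end

section
/- The simple game on voters {1,...,6} with A={1,2}, B={3,4,5,6}, defined by v(S)=1 iff |S|≥3 and |S∩A|≥1, is a complete simple game but is not weighted. -/
open Finset

def v7 (S : Finset (Fin 6)) : ℕ :=
  if 3 ≤ S.card ∧ (S ∩ ({0,1} : Finset (Fin 6))).Nonempty then 1 else 0

/-- Trade robustness: the exchange preserves total weight, so the two new coalitions cannot both
fall below the quota. -/
theorem IsWeighted.winning_of_exchange {n : ℕ} {v : Finset (Fin n) → ℕ} (hv : IsWeighted v)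
    {S₁ S₂ T₁ T₂ : Finset (Fin n)} (hS : Disjoint S₁ S₂) (hT : Disjoint T₁ T₂)
    (hST : S₁ ∪ S₂ = T₁ ∪ T₂) (h₁ : v S₁ = 1) (h₂ : v S₂ = 1) : v T₁ = 1 ∨ v T₂ = 1 := by
  obtain ⟨w, q, -, -, hvw⟩ := hv
  have hsum : ∑ i ∈ S₁, w i + ∑ i ∈ S₂, w i = ∑ i ∈ T₁, w i + ∑ i ∈ T₂, w i := by
    rw [← sum_union hS, ← sum_union hT, hST]
  simp only [hvw] at h₁ h₂ ⊢
  by_contra! h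
  linarith [h.1, h.2]

/-- Voters of `A = {0, 1}` dominate those of `B`, and voters within `A` or within `B` are
interchangeable; the finite check confirms it. -/
theorem v7_dominates_total (i j : Fin 6) : Dominates v7 i j ∨ Dominates v7 j i := by
  revert i j
  unfold Dominates
  decide

/-- The winning coalitions `{0, 2, 3}` and `{1, 4, 5}` trade into `{0, 1}` (too small) and
`{2, 3, 4, 5}` (no voter of `A`), which both lose. -/
theorem v7_not_weighted : ¬ IsWeighted v7 := fun hv =>
  absurd (hv.winning_of_exchange (S₁ := {0, 2, 3}) (S₂ := {1, 4, 5}) (T₁ := {0, 1})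
    (T₂ := {2, 3, 4, 5}) (by decide) (by decide) (by decide) (by decide) (by decide)) (by decide)

theorem stmt7 :
    (∀ i j : Fin 6, Dominates v7 i j ∨ Dominates v7 j i) ∧ ¬ IsWeighted v7 :=
  ⟨v7_dominates_total, v7_not_weighted⟩
end

section
/- If i⪰j in Isbell's desirability relation for a simple game v, then SSI_i(v) ≥ SSI_j(v) and η_i(v) ≥ η_j(v). Consequently, for a complete simple game with 1⪰2⪰...⪰n, the Shapley-Shubik and Banzhaf power vectors are non-increasing. -/
open Finset

/-! The transposition `(i j)` maps the coalitions avoiding `i` bijectively and size-preservingly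
onto those avoiding `j`, and `i ⪰ j` makes the marginal contribution of `j` to the image of `S`
at most that of `i` to `S`. Both indices are sums of marginal contributions with nonnegative
weights depending only on the coalition size, so they compare term by term. -/

namespace Finset

variable {α : Type*} [DecidableEq α] {i j : α} {S : Finset α}

lemma map_swap_of_notMem_of_notMem (hi : i ∉ S) (hj : j ∉ S) :
    S.map (Equiv.swap i j).toEmbedding = S := by
  ext x
  simp only [mem_map_equiv, Equiv.symm_swap]
  by_cases hxi : x = i
  · subst hxi; simp [hi, hj]
  by_cases hxj : x = j
  · subst hxj; simp [hi, hj]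
  rw [Equiv.swap_apply_of_ne_of_ne hxi hxj]

lemma map_swap_of_notMem_of_mem (hi : i ∉ S) (hj : j ∈ S) :
    S.map (Equiv.swap i j).toEmbedding = insert i (S.erase j) := by
  conv_lhs => rw [← insert_erase hj]
  rw [map_insert, Equiv.coe_toEmbedding, Equiv.swap_apply_right,
    map_swap_of_notMem_of_notMem (fun h => hi (mem_of_mem_erase h)) (notMem_erase j S)]

lemma sum_powerset_erase_swap [Fintype α] {M : Type*} [AddCommMonoid M] (i j : α)
    (f : Finset α → M) :
    ∑ S ∈ (univ.erase j).powerset, f S =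
      ∑ S ∈ (univ.erase i).powerset, f (S.map (Equiv.swap i j).toEmbedding) := by
  symm
  refine sum_equiv (Equiv.swap i j).finsetCongr (fun S => ?_) (fun S _ => rfl)
  simp [Equiv.finsetCongr_apply, subset_erase, mem_map_equiv]

end Finset

open Finset Nat

section Dominates

variable {n : ℕ} {v : Finset (Fin n) → ℕ} {i j : Fin n}
  {R : Type*} [CommRing R] [PartialOrder R] [IsOrderedRing R]

lemma Dominates.marginal_swap_le (hd : Dominates v i j) {S : Finset (Fin n)} (hi : i ∉ S) :
    (v (insert j (S.map (Equiv.swap i j).toEmbedding)) : R) -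
        v (S.map (Equiv.swap i j).toEmbedding) ≤ (v (insert i S) : R) - v S := by
  by_cases hj : j ∈ S
  · -- The image is `insert i T` with `T = S.erase j`, so both sides start with `v (insert i S)`.
    have hiT : i ∉ S.erase j := fun h => hi (mem_of_mem_erase h)
    have hT := hd _ hiT (notMem_erase j S)
    rw [insert_erase hj] at hT
    rw [map_swap_of_notMem_of_mem hi hj, insert_comm, insert_erase hj]
    exact sub_le_sub_left (Nat.mono_cast hT) _
  · rw [map_swap_of_notMem_of_notMem hi hj]
    exact sub_le_sub_right (Nat.mono_cast (hd S hi hj)) _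

lemma Dominates.sum_weighted_marginal_le (hd : Dominates v i j) (w : ℕ → R)
    (hw : ∀ k, 0 ≤ w k) :
    ∑ S ∈ (univ.erase j).powerset, w #S * ((v (insert j S) : R) - v S) ≤
      ∑ S ∈ (univ.erase i).powerset, w #S * ((v (insert i S) : R) - v S) := by
  rw [sum_powerset_erase_swap i j]
  refine sum_le_sum fun S hS => ?_
  rw [card_map]
  have hi : i ∉ S := by simpa [subset_erase] using hS
  exact mul_le_mul_of_nonneg_left (hd.marginal_swap_le hi) (hw _)

lemma Dominates.SSI_le (hd : Dominates v i j) : SSI v j ≤ SSI v i :=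
  hd.sum_weighted_marginal_le (fun k => ((k ! * (n - k - 1)! : ℕ) : ℝ) / n !)
    fun _ => by positivity

lemma Dominates.eta_le (hd : Dominates v i j) : eta v j ≤ eta v i := by
  simpa only [eta, one_mul] using
    hd.sum_weighted_marginal_le (fun _ => (1 : ℤ)) fun _ => zero_le_one

end Dominates

theorem stmt11_general (n : ℕ) (v : Finset (Fin n) → ℕ) :
    (∀ i j : Fin n, Dominates v i j → SSI v j ≤ SSI v i ∧ eta v j ≤ eta v i) ∧
    ((∀ i j : Fin n, i ≤ j → Dominates v i j) →
      ∀ i j : Fin n, i ≤ j → SSI v j ≤ SSI v i ∧ eta v j ≤ eta v i) := by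
  have power_le :
      ∀ i j : Fin n, Dominates v i j → SSI v j ≤ SSI v i ∧ eta v j ≤ eta v i :=
    fun _ _ hd => ⟨hd.SSI_le, hd.eta_le⟩
  exact ⟨power_le, fun hcomplete i j hij => power_le i j (hcomplete i j hij)⟩

theorem stmt11 (n : ℕ) (v : Finset (Fin n) → ℕ) (hv : IsSimpleGame v) :
    (∀ i j : Fin n, Dominates v i j → SSI v j ≤ SSI v i ∧ eta v j ≤ eta v i) ∧
    ((∀ i j : Fin n, i ≤ j → Dominates v i j) →
      ∀ i j : Fin n, i ≤ j → SSI v j ≤ SSI v i ∧ eta v j ≤ eta v i) :=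
  stmt11_general n v
end

section
/- There are exactly 8 weighted games with 3 voters up to relabeling of voters with non-increasing weights, represented by [1;1,0,0], [1;1,1,0], [2;1,1,0], [1;1,1,1], [2;1,1,1], [3;1,1,1], [2;2,1,1], [3;2,1,1]; moreover every simple game on 3 voters equals one of these up to a permutation of the voters. -/
/-!
The eight games have natural-number quotas and weights, so they agree with computable games,
and both their pairwise non-isomorphism and the classification become finite checks: a simple
game on three voters is a monotone, non-constant `Finset (Fin 3) → Bool`, and each of these
(at most 2^8) functions is matched by `decide` against the eight games under the six
permutations of the voters.
-/

open Finset

noncomputable def G : Fin 8 → (Finset (Fin 3) → ℕ) :=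
  ![wg 1 ![1,0,0], wg 1 ![1,1,0], wg 2 ![1,1,0], wg 1 ![1,1,1],
    wg 2 ![1,1,1], wg 3 ![1,1,1], wg 2 ![2,1,1], wg 3 ![2,1,1]]


def natWeightedGame {n : ℕ} (q : ℕ) (w : Fin n → ℕ) (S : Finset (Fin n)) : ℕ :=
  if q ≤ ∑ i ∈ S, w i then 1 else 0

theorem wg_eq_natWeightedGame {n : ℕ} {q' : ℝ} {w' : Fin n → ℝ} {q : ℕ} {w : Fin n → ℕ}
    (hq : q' = q) (hw : ∀ i, w' i = w i) : wg q' w' = natWeightedGame q w := by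
  funext S
  simp only [wg, natWeightedGame, hq, hw, ← Nat.cast_sum, Nat.cast_le]

theorem isWeighted_wg {n : ℕ} {q : ℝ} {w : Fin n → ℝ} (hw : ∀ i, 0 ≤ w i) (hq : 0 < q) :
    IsWeighted (wg q w) :=
  ⟨w, q, hw, hq, fun S => by unfold wg; split_ifs with h <;> simp [h]⟩

theorem isWeighted_natWeightedGame {n : ℕ} {q : ℕ} (w : Fin n → ℕ) (hq : 0 < q) :
    IsWeighted (natWeightedGame q w) := by
  rw [← wg_eq_natWeightedGame rfl fun i => rfl]
  exact isWeighted_wg (fun i => Nat.cast_nonneg (w i)) (Nat.cast_pos.mpr hq)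

theorem IsSimpleGame.exists_bool {n : ℕ} {v : Finset (Fin n) → ℕ} (hv : IsSimpleGame v) :
    ∃ f : Finset (Fin n) → Bool, (∀ S T, S ⊆ T → f S ≤ f T) ∧
      (∃ S, f S = false) ∧ (∃ S, f S = true) ∧ ∀ S, v S = (f S).toNat := by
  obtain ⟨h01, hmono, ⟨S₀, hS₀⟩, ⟨S₁, hS₁⟩⟩ := hv
  have hvf : ∀ S, v S = (decide (v S = 1)).toNat := fun S => by
    rcases h01 S with h | h <;> simp [h]
  refine ⟨fun S => decide (v S = 1), fun S T hST => ?_, ⟨S₀, by simp [hS₀]⟩,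
    ⟨S₁, by simp [hS₁]⟩, hvf⟩
  have := hmono S T hST
  rcases h01 S with h | h <;> rcases h01 T with h' | h' <;> simp [h, h'] at this ⊢

def quota : Fin 8 → ℕ := ![1, 1, 2, 1, 2, 3, 2, 3]

def weights : Fin 8 → Fin 3 → ℕ :=
  ![![1, 0, 0], ![1, 1, 0], ![1, 1, 0], ![1, 1, 1], ![1, 1, 1], ![1, 1, 1], ![2, 1, 1],
    ![2, 1, 1]]

theorem G_eq_natWeightedGame (a : Fin 8) : G a = natWeightedGame (quota a) (weights a) := by
  fin_cases a <;>
    exact wg_eq_natWeightedGame (by norm_num [quota]) fun i => by fin_cases i <;> norm_num [weights]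

theorem natWeightedGame_perm_injective (a b : Fin 8) :
    (∃ σ : Equiv.Perm (Fin 3), ∀ S, natWeightedGame (quota a) (weights a) S =
      natWeightedGame (quota b) (weights b) (S.image σ)) → a = b := by
  revert a b
  decide

set_option maxRecDepth 10000 in
theorem exists_perm_natWeightedGame_of_monotone (f : Finset (Fin 3) → Bool)
    (hf : ∀ S T, S ⊆ T → f S ≤ f T) (hf₀ : ∃ S, f S = false) (hf₁ : ∃ S, f S = true) :
    ∃ a : Fin 8, ∃ σ : Equiv.Perm (Fin 3), ∀ S,
      (f S).toNat = natWeightedGame (quota a) (weights a) (S.image σ) := by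
  revert f
  decide

theorem stmt17 :
    (∀ a : Fin 8, IsWeighted (G a)) ∧
    (∀ a b : Fin 8, (∃ σ : Equiv.Perm (Fin 3), ∀ S, G a S = G b (S.image σ)) → a = b) ∧
    (∀ v : Finset (Fin 3) → ℕ, IsSimpleGame v →
      ∃ a : Fin 8, ∃ σ : Equiv.Perm (Fin 3), ∀ S, v S = G a (S.image σ)) := by
  simp only [G_eq_natWeightedGame]
  refine ⟨fun a => isWeighted_natWeightedGame _ (by revert a; decide),
    natWeightedGame_perm_injective, fun v hv => ?_⟩
  obtain ⟨f, hf, hf₀, hf₁, hvf⟩ := hv.exists_bool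
  simp only [hvf]
  exact exists_perm_natWeightedGame_of_monotone f hf hf₀ hf₁
end
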